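/- Assume (i) consistency for a=2, (ii) mean transportability for a=2 (E[Y²|X=x,S=1]=E[Y²|X=x,S=0] whenever both events have positive probability), (iii) positivity of the external source (P(S=0|X=x)>0 whenever P(X=x,S=1)>0), (iv) conditional exchangeability over A in the external data for a=2 (E[Y²|X=x,S=0]=E[Y²|X=x,S=0,A=2] whenever P(X=x,S=0)>0), and (v) positivity of treatment 2 in the external data (P(A=2|X=x,S=0)>0 whenever P(X=x,S=0)>0). Then E[Y² | S=1] = γ_{0,2} := Σ_x E[Y | X=x, S=0, A=2] · P(X=x | S=1), summing over x with P(X=x,S=1)>0. -/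

import Mathlib

/-! Condition on the covariate `X`: by the law of total expectation, `E[Y² | S = 1]` is the
`P(X = x | S = 1)`-weighted average of `E[Y² | X = x, S = 1]`. For each such `x`, positivity of the
external source makes `{X = x, S = 0}` non-null, so transportability, then exchangeability, then
consistency turn `E[Y² | X = x, S = 1]` into `E[Y | X = x, S = 0, A = 2]`. -/

open Finset
open scoped Classical

noncomputable def pr {Ω : Type*} [Fintype Ω] (P : Ω → ℝ) (E : Ω → Prop) : ℝ :=
  ∑ ω, if E ω then P ω else 0

noncomputable def cexp {Ω : Type*} [Fintype Ω] (P : Ω → ℝ) (Y : Ω → ℝ) (E : Ω → Prop) : ℝ :=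
  (∑ ω, if E ω then Y ω * P ω else 0) / pr P E

noncomputable def cpr {Ω : Type*} [Fintype Ω] (P : Ω → ℝ) (E F : Ω → Prop) : ℝ :=
  pr P (fun ω => E ω ∧ F ω) / pr P F

noncomputable def pexp {Ω : Type*} [Fintype Ω] (P : Ω → ℝ) (Y : Ω → ℝ) (E : Ω → Prop) : ℝ :=
  ∑ ω, if E ω then Y ω * P ω else 0

section FiniteProbability

variable {Ω : Type*} [Fintype Ω] (P : Ω → ℝ)

theorem cexp_eq_pexp_div (Y : Ω → ℝ) (E : Ω → Prop) : cexp P Y E = pexp P Y E / pr P E := rfl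

theorem pr_nonneg (hP : ∀ ω, 0 ≤ P ω) (E : Ω → Prop) : 0 ≤ pr P E :=
  sum_nonneg fun ω _ => by split_ifs <;> simp [hP ω]

theorem pr_congr {E F : Ω → Prop} (h : ∀ ω, E ω ↔ F ω) : pr P E = pr P F :=
  sum_congr rfl fun ω _ => if_congr (h ω) rfl rfl

theorem pr_and_pos_of_cpr_pos (hP : ∀ ω, 0 ≤ P ω) {E F : Ω → Prop} (h : 0 < cpr P E F) :
    0 < pr P (fun ω => F ω ∧ E ω) := by
  rw [pr_congr P fun ω => and_comm]
  exact pos_of_mul_pos_left h (inv_nonneg.mpr (pr_nonneg P hP F))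

theorem cexp_congr {Y Z : Ω → ℝ} {E : Ω → Prop} (h : ∀ ω, E ω → Y ω = Z ω) :
    cexp P Y E = cexp P Z E := by
  simp only [cexp_eq_pexp_div, pexp]
  congr 1
  refine sum_congr rfl fun ω _ => ?_
  split_ifs with hE
  · rw [h ω hE]
  · rfl

theorem pexp_eq_zero_of_pr_eq_zero (hP : ∀ ω, 0 ≤ P ω) (Y : Ω → ℝ) {E : Ω → Prop}
    (h : pr P E = 0) : pexp P Y E = 0 := by
  have hzero := (sum_eq_zero_iff_of_nonneg fun ω _ => ?_).mp h
  · refine sum_eq_zero fun ω hω => ?_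
    specialize hzero ω hω
    split_ifs at hzero ⊢ <;> simp [hzero]
  · split_ifs <;> simp [hP ω]

theorem pexp_eq_sum_pexp_fiber {α : Type*} [Fintype α] (X : Ω → α) (Y : Ω → ℝ) (E : Ω → Prop) :
    pexp P Y E = ∑ x, pexp P Y (fun ω => X ω = x ∧ E ω) := by
  simp only [pexp]
  rw [sum_comm]
  refine sum_congr rfl fun ω _ => ?_
  by_cases hE : E ω <;> simp [hE]

theorem cexp_eq_sum_cexp_mul_cpr (hP : ∀ ω, 0 ≤ P ω) {α : Type*} [Fintype α] (X : Ω → α)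
    (Y : Ω → ℝ) (E : Ω → Prop) :
    cexp P Y E = ∑ x ∈ univ.filter (fun x => 0 < pr P (fun ω => X ω = x ∧ E ω)),
      cexp P Y (fun ω => X ω = x ∧ E ω) * cpr P (fun ω => X ω = x) E := by
  have hfibres : pexp P Y E = ∑ x ∈ univ.filter (fun x => 0 < pr P (fun ω => X ω = x ∧ E ω)),
      pexp P Y (fun ω => X ω = x ∧ E ω) := by
    rw [pexp_eq_sum_pexp_fiber P X]
    refine (sum_subset (filter_subset _ _) fun x _ hx => ?_).symm
    have hnull : pr P (fun ω => X ω = x ∧ E ω) = 0 :=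
      le_antisymm (not_lt.mp (by simpa using hx)) (pr_nonneg P hP _)
    exact pexp_eq_zero_of_pr_eq_zero P hP Y hnull
  rw [cexp_eq_pexp_div, hfibres, sum_div]
  refine sum_congr rfl fun x hx => ?_
  rw [cexp_eq_pexp_div, cpr, div_mul_div_cancel₀ (mem_filter.mp hx).2.ne']

end FiniteProbability

theorem stmt5_general    {Ω 𝓧 : Type*} [Fintype Ω] [Fintype 𝓧]
    (P : Ω → ℝ) (hP : ∀ ω, 0 ≤ P ω)
    (X : Ω → 𝓧) (S : Ω → ℕ) (A : Ω → ℕ) (Y : Ω → ℝ)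
    (Y2 : Ω → ℝ)
    (hcons : ∀ ω, A ω = 2 → Y2 ω = Y ω)
    (htrans : ∀ x, 0 < pr P (fun ω => X ω = x ∧ S ω = 1) → 0 < pr P (fun ω => X ω = x ∧ S ω = 0) → cexp P Y2 (fun ω => X ω = x ∧ S ω = 1) = cexp P Y2 (fun ω => X ω = x ∧ S ω = 0))
    (hextpos : ∀ x, 0 < pr P (fun ω => X ω = x ∧ S ω = 1) → 0 < cpr P (fun ω => S ω = 0) (fun ω => X ω = x))
    (hexchext : ∀ x, 0 < pr P (fun ω => X ω = x ∧ S ω = 0) → cexp P Y2 (fun ω => X ω = x ∧ S ω = 0) = cexp P Y2 (fun ω => X ω = x ∧ S ω = 0 ∧ A ω = 2))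
    : cexp P Y2 (fun ω => S ω = 1) =
      ∑ x ∈ univ.filter (fun x => 0 < pr P (fun ω => X ω = x ∧ S ω = 1)),
        cexp P Y (fun ω => X ω = x ∧ S ω = 0 ∧ A ω = 2) * (pr P (fun ω => X ω = x ∧ S ω = 1) / pr P (fun ω => S ω = 1)) := by
  rw [cexp_eq_sum_cexp_mul_cpr P hP X]
  refine sum_congr rfl fun x hx => ?_
  have hx1 : 0 < pr P (fun ω => X ω = x ∧ S ω = 1) := (mem_filter.mp hx).2
  have hx0 : 0 < pr P (fun ω => X ω = x ∧ S ω = 0) := pr_and_pos_of_cpr_pos P hP (hextpos x hx1)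
  have hcons_fiber : cexp P Y2 (fun ω => X ω = x ∧ S ω = 0 ∧ A ω = 2) =
      cexp P Y (fun ω => X ω = x ∧ S ω = 0 ∧ A ω = 2) :=
    cexp_congr P fun ω hω => hcons ω hω.2.2
  rw [htrans x hx1 hx0, hexchext x hx0, hcons_fiber, cpr]

theorem stmt5    {Ω 𝓧 : Type*} [Fintype Ω] [Fintype 𝓧]
    (P : Ω → ℝ) (hP : ∀ ω, 0 ≤ P ω) (hPsum : ∑ ω, P ω = 1)
    (X : Ω → 𝓧) (S : Ω → ℕ) (A : Ω → ℕ) (Y : Ω → ℝ)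
    (Y2 : Ω → ℝ)
    (hS1 : 0 < pr P (fun ω => S ω = 1))
    (hcons : ∀ ω, A ω = 2 → Y2 ω = Y ω)
    (htrans : ∀ x, 0 < pr P (fun ω => X ω = x ∧ S ω = 1) → 0 < pr P (fun ω => X ω = x ∧ S ω = 0) → cexp P Y2 (fun ω => X ω = x ∧ S ω = 1) = cexp P Y2 (fun ω => X ω = x ∧ S ω = 0))
    (hextpos : ∀ x, 0 < pr P (fun ω => X ω = x ∧ S ω = 1) → 0 < cpr P (fun ω => S ω = 0) (fun ω => X ω = x))
    (hexchext : ∀ x, 0 < pr P (fun ω => X ω = x ∧ S ω = 0) → cexp P Y2 (fun ω => X ω = x ∧ S ω = 0) = cexp P Y2 (fun ω => X ω = x ∧ S ω = 0 ∧ A ω = 2))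
    (hposext : ∀ x, 0 < pr P (fun ω => X ω = x ∧ S ω = 0) → 0 < cpr P (fun ω => A ω = 2) (fun ω => X ω = x ∧ S ω = 0))
    : cexp P Y2 (fun ω => S ω = 1) =
      ∑ x ∈ univ.filter (fun x => 0 < pr P (fun ω => X ω = x ∧ S ω = 1)),
        cexp P Y (fun ω => X ω = x ∧ S ω = 0 ∧ A ω = 2) * (pr P (fun ω => X ω = x ∧ S ω = 1) / pr P (fun ω => S ω = 1)) :=
  stmt5_general P hP X S A Y Y2 hcons htrans hextpos hexchext
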